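/- Let n ≥ 1 and let f : ℝ^n × ℝ^n × ℝ^n → ℂ be smooth. If D_s f = 0 and D_t f = 0 identically, then f is harmonic in the (x,y)-variables: Σ_{j=1}^n ( ∂²f/∂x_j² + ∂²f/∂y_j² ) = 0 identically. -/

import Mathlib

open Complex Finset Matrix

noncomputable section

/-- A point of `ℝ^n × ℝ^n × ℝ^n`, with coordinates `(x, y, q)`. -/
abbrev Vec (n : ℕ) := (Fin n → ℝ) × (Fin n → ℝ) × (Fin n → ℝ)

/-- Partial derivative in the variable `x_j`. -/
noncomputable def pdx (n : ℕ) (j : Fin n) (f : Vec n → ℂ) : Vec n → ℂ :=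
  fun p => deriv (fun t => f (Function.update p.1 j t, p.2.1, p.2.2)) (p.1 j)

/-- Partial derivative in the variable `y_j`. -/
noncomputable def pdy (n : ℕ) (j : Fin n) (f : Vec n → ℂ) : Vec n → ℂ :=
  fun p => deriv (fun t => f (p.1, Function.update p.2.1 j t, p.2.2)) (p.2.1 j)

/-- Partial derivative in the variable `q_j`. -/
noncomputable def pdq (n : ℕ) (j : Fin n) (f : Vec n → ℂ) : Vec n → ℂ :=
  fun p => deriv (fun t => f (p.1, p.2.1, Function.update p.2.2 j t)) (p.2.2 j)

/-- The symplectic Dirac operator `D_s f = Σ_j (i q_j ∂f/∂y_j − ∂²f/∂q_j∂x_j)`. -/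
noncomputable def Ds (n : ℕ) (f : Vec n → ℂ) : Vec n → ℂ :=
  fun p => ∑ j : Fin n, (Complex.I * (p.2.2 j : ℂ) * pdy n j f p - pdq n j (pdx n j f) p)

/-- The twisted symplectic Dirac operator `D_t f = Σ_j (i q_j ∂f/∂x_j + ∂²f/∂y_j∂q_j)`. -/
noncomputable def Dt (n : ℕ) (f : Vec n → ℂ) : Vec n → ℂ :=
  fun p => ∑ j : Fin n, (Complex.I * (p.2.2 j : ℂ) * pdx n j f p + pdy n j (pdq n j f) p)

/-- The Fischer dual `X_s f = Σ_j (y_j ∂f/∂q_j + i q_j x_j f)`. -/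
noncomputable def Xs (n : ℕ) (f : Vec n → ℂ) : Vec n → ℂ :=
  fun p => ∑ j : Fin n, ((p.2.1 j : ℂ) * pdq n j f p + Complex.I * (p.2.2 j : ℂ) * (p.1 j : ℂ) * f p)

/-- The Fischer dual `X_t f = Σ_j (x_j ∂f/∂q_j − i y_j q_j f)`. -/
noncomputable def Xt (n : ℕ) (f : Vec n → ℂ) : Vec n → ℂ :=
  fun p => ∑ j : Fin n, ((p.1 j : ℂ) * pdq n j f p - Complex.I * (p.2.1 j : ℂ) * (p.2.2 j : ℂ) * f p)

/-- The Euler operator `𝔼 f = Σ_j (x_j ∂f/∂x_j + y_j ∂f/∂y_j)`. -/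
noncomputable def EulerOp (n : ℕ) (f : Vec n → ℂ) : Vec n → ℂ :=
  fun p => ∑ j : Fin n, ((p.1 j : ℂ) * pdx n j f p + (p.2.1 j : ℂ) * pdy n j f p)

/-- The Laplacian in the `(x,y)` variables. -/
noncomputable def Lap (n : ℕ) (f : Vec n → ℂ) : Vec n → ℂ :=
  fun p => ∑ j : Fin n, (pdx n j (pdx n j f) p + pdy n j (pdy n j f) p)

/-! The two operators satisfy the commutation relation `[D_t, D_s] = i Δ_{x,y}` on smooth
functions. Writing `D_s = Σ_j B_j` with `B_j = i q_j ∂_{y_j} − ∂_{q_j} ∂_{x_j}` and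
`D_t = Σ_k A_k` with `A_k = i q_k ∂_{x_k} + ∂_{y_k} ∂_{q_k}`, mixed partials commute, so the only
contributions to `[A_k, B_j]` come from `∂_{q_k}` or `∂_{q_j}` falling on a coefficient `q`;
they give `i δ_{jk} (∂²_{x_k} + ∂²_{y_k})`. A function killed by `D_s` and `D_t` is therefore
killed by `i Δ_{x,y}`. -/

open scoped ContDiff

section DirDeriv

variable {E : Type*} [NormedAddCommGroup E] [NormedSpace ℝ E] {v w : E} {g h : E → ℂ}

def dirDeriv (v : E) (g : E → ℂ) : E → ℂ := fun p => fderiv ℝ g p v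

@[fun_prop]
theorem ContDiff.dirDeriv (hg : ContDiff ℝ ∞ g) : ContDiff ℝ ∞ (fun p => dirDeriv v g p) :=
  (hg.fderiv_right (m := ∞) le_rfl).clm_apply contDiff_const

theorem dirDeriv_comm (hg : ContDiff ℝ 2 g) :
    dirDeriv v (dirDeriv w g) = dirDeriv w (dirDeriv v g) := by
  have hD : Differentiable ℝ (fderiv ℝ g) :=
    (hg.fderiv_right (m := 1) (by norm_num)).differentiable one_ne_zero
  have dirDeriv_dirDeriv (a b p : E) :
      dirDeriv a (dirDeriv b g) p = fderiv ℝ (fderiv ℝ g) p a b := by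
    change fderiv ℝ (fun q => fderiv ℝ g q b) p a = _
    rw [fderiv_clm_apply (hD p) (differentiableAt_const b)]
    simp
  funext p
  rw [dirDeriv_dirDeriv, dirDeriv_dirDeriv]
  exact hg.contDiffAt.isSymmSndFDerivAt (by simp) v w

theorem dirDeriv_fun_add (hg : Differentiable ℝ g) (hh : Differentiable ℝ h) :
    dirDeriv v (fun p => g p + h p) = fun p => dirDeriv v g p + dirDeriv v h p := by
  funext p
  simp [dirDeriv, fderiv_fun_add (hg p) (hh p)]

theorem dirDeriv_fun_sub (hg : Differentiable ℝ g) (hh : Differentiable ℝ h) :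
    dirDeriv v (fun p => g p - h p) = fun p => dirDeriv v g p - dirDeriv v h p := by
  funext p
  simp [dirDeriv, fderiv_fun_sub (hg p) (hh p)]

theorem dirDeriv_fun_sum {ι : Type*} (s : Finset ι) {F : ι → E → ℂ}
    (hF : ∀ i ∈ s, Differentiable ℝ (F i)) :
    dirDeriv v (fun p => ∑ i ∈ s, F i p) = fun p => ∑ i ∈ s, dirDeriv v (F i) p := by
  funext p
  simp [dirDeriv, fderiv_fun_sum fun i hi => hF i hi p]

theorem dirDeriv_fun_const_mul (c : ℂ) :
    dirDeriv v (fun p => c * g p) = fun p => c * dirDeriv v g p := by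
  funext p
  change fderiv ℝ (c • g) p v = _
  simp [fderiv_const_smul_field, dirDeriv]

theorem dirDeriv_fun_clm_mul (ℓ : E →L[ℝ] ℂ) (hg : Differentiable ℝ g) :
    dirDeriv v (fun p => ℓ p * g p) = fun p => ℓ v * g p + ℓ p * dirDeriv v g p := by
  funext p
  simp [dirDeriv, fderiv_fun_mul ℓ.differentiableAt (hg p)]
  ring

end DirDeriv

section Coordinates

variable {n : ℕ} {g : Vec n → ℂ}

def eX (n : ℕ) (j : Fin n) : Vec n := (Pi.single j 1, 0, 0)

def eY (n : ℕ) (j : Fin n) : Vec n := (0, Pi.single j 1, 0)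

def eQ (n : ℕ) (j : Fin n) : Vec n := (0, 0, Pi.single j 1)

def coordQ (n : ℕ) (j : Fin n) : Vec n →L[ℝ] ℂ :=
  ofRealCLM.comp ((ContinuousLinearMap.proj j).comp
    ((ContinuousLinearMap.snd ℝ _ _).comp (ContinuousLinearMap.snd ℝ _ _)))

@[simp]
theorem coordQ_apply (j : Fin n) (p : Vec n) : coordQ n j p = (p.2.2 j : ℂ) := rfl

@[simp]
theorem coordQ_eX (j k : Fin n) : coordQ n j (eX n k) = 0 := by simp [eX]

@[simp]
theorem coordQ_eY (j k : Fin n) : coordQ n j (eY n k) = 0 := by simp [eY]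

@[simp]
theorem coordQ_eQ (j k : Fin n) : coordQ n j (eQ n k) = if j = k then 1 else 0 := by
  by_cases h : j = k <;> simp [eQ, h]

theorem pdx_eq_dirDeriv (j : Fin n) (hg : Differentiable ℝ g) :
    pdx n j g = dirDeriv (eX n j) g := by
  funext p
  have hγ : HasDerivAt (fun t => (Function.update p.1 j t, p.2.1, p.2.2)) (eX n j) (p.1 j) :=
    (hasDerivAt_update p.1 j _).prodMk ((hasDerivAt_const _ _).prodMk (hasDerivAt_const _ _))
  simpa [Function.comp_def, pdx, dirDeriv] using ((hg _).hasFDerivAt.comp_hasDerivAt _ hγ).deriv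

theorem pdy_eq_dirDeriv (j : Fin n) (hg : Differentiable ℝ g) :
    pdy n j g = dirDeriv (eY n j) g := by
  funext p
  have hγ : HasDerivAt (fun t => (p.1, Function.update p.2.1 j t, p.2.2)) (eY n j) (p.2.1 j) :=
    (hasDerivAt_const _ _).prodMk ((hasDerivAt_update p.2.1 j _).prodMk (hasDerivAt_const _ _))
  simpa [Function.comp_def, pdy, dirDeriv] using ((hg _).hasFDerivAt.comp_hasDerivAt _ hγ).deriv

theorem pdq_eq_dirDeriv (j : Fin n) (hg : Differentiable ℝ g) :
    pdq n j g = dirDeriv (eQ n j) g := by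
  funext p
  have hγ : HasDerivAt (fun t => (p.1, p.2.1, Function.update p.2.2 j t)) (eQ n j) (p.2.2 j) :=
    (hasDerivAt_const _ _).prodMk ((hasDerivAt_const _ _).prodMk (hasDerivAt_update p.2.2 j _))
  simpa [Function.comp_def, pdq, dirDeriv] using ((hg _).hasFDerivAt.comp_hasDerivAt _ hγ).deriv

end Coordinates

section Commutator

variable {n : ℕ} {g : Vec n → ℂ}

def dsSummand (n : ℕ) (j : Fin n) (g : Vec n → ℂ) : Vec n → ℂ :=
  fun p => I * (coordQ n j p * dirDeriv (eY n j) g p) - dirDeriv (eQ n j) (dirDeriv (eX n j) g) p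

def dtSummand (n : ℕ) (k : Fin n) (g : Vec n → ℂ) : Vec n → ℂ :=
  fun p => I * (coordQ n k p * dirDeriv (eX n k) g p) + dirDeriv (eY n k) (dirDeriv (eQ n k) g) p

@[fun_prop]
theorem contDiff_dsSummand (hg : ContDiff ℝ ∞ g) (j : Fin n) :
    ContDiff ℝ ∞ (fun p => dsSummand n j g p) := by
  unfold dsSummand
  fun_prop

@[fun_prop]
theorem contDiff_dtSummand (hg : ContDiff ℝ ∞ g) (k : Fin n) :
    ContDiff ℝ ∞ (fun p => dtSummand n k g p) := by
  unfold dtSummand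
  fun_prop

theorem dsSummand_fun_sum {F : Fin n → Vec n → ℂ} (hF : ∀ k, ContDiff ℝ ∞ (F k)) (j : Fin n) :
    dsSummand n j (fun p => ∑ k, F k p) = fun p => ∑ k, dsSummand n j (F k) p := by
  unfold dsSummand
  simp (disch := first | fun_prop (disch := simp) | intros; fun_prop (disch := simp)) only
    [dirDeriv_fun_sum]
  funext p
  simp only [Finset.mul_sum, Finset.sum_sub_distrib]

theorem dtSummand_fun_sum {F : Fin n → Vec n → ℂ} (hF : ∀ j, ContDiff ℝ ∞ (F j)) (k : Fin n) :
    dtSummand n k (fun p => ∑ j, F j p) = fun p => ∑ j, dtSummand n k (F j) p := by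
  unfold dtSummand
  simp (disch := first | fun_prop (disch := simp) | intros; fun_prop (disch := simp)) only
    [dirDeriv_fun_sum]
  funext p
  simp only [Finset.mul_sum, Finset.sum_add_distrib]

theorem Ds_eq_sum_dsSummand (hg : ContDiff ℝ ∞ g) : Ds n g = fun p => ∑ j, dsSummand n j g p := by
  have hd : Differentiable ℝ g := hg.differentiable (by simp)
  have hd' (v : Vec n) : Differentiable ℝ (dirDeriv v g) := hg.dirDeriv.differentiable (by simp)
  funext p
  simp only [Ds, dsSummand, pdx_eq_dirDeriv _ hd, pdy_eq_dirDeriv _ hd,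
    pdq_eq_dirDeriv _ (hd' _), coordQ_apply]
  exact Finset.sum_congr rfl fun j _ => by ring

theorem Dt_eq_sum_dtSummand (hg : ContDiff ℝ ∞ g) : Dt n g = fun p => ∑ k, dtSummand n k g p := by
  have hd : Differentiable ℝ g := hg.differentiable (by simp)
  have hd' (v : Vec n) : Differentiable ℝ (dirDeriv v g) := hg.dirDeriv.differentiable (by simp)
  funext p
  simp only [Dt, dtSummand, pdx_eq_dirDeriv _ hd, pdq_eq_dirDeriv _ hd,
    pdy_eq_dirDeriv _ (hd' _), coordQ_apply]
  exact Finset.sum_congr rfl fun k _ => by ring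

theorem Lap_eq_sum_dirDeriv (hg : ContDiff ℝ ∞ g) :
    Lap n g = fun p => ∑ k, (dirDeriv (eX n k) (dirDeriv (eX n k) g) p
      + dirDeriv (eY n k) (dirDeriv (eY n k) g) p) := by
  have hd : Differentiable ℝ g := hg.differentiable (by simp)
  have hd' (v : Vec n) : Differentiable ℝ (dirDeriv v g) := hg.dirDeriv.differentiable (by simp)
  funext p
  simp only [Lap, pdx_eq_dirDeriv _ hd, pdy_eq_dirDeriv _ hd,
    pdx_eq_dirDeriv _ (hd' _), pdy_eq_dirDeriv _ (hd' _)]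

theorem dtSummand_dsSummand_sub_dsSummand_dtSummand (hg : ContDiff ℝ ∞ g) (j k : Fin n)
    (p : Vec n) :
    dtSummand n k (dsSummand n j g) p - dsSummand n j (dtSummand n k g) p =
      if j = k then I * (dirDeriv (eX n k) (dirDeriv (eX n k) g) p
        + dirDeriv (eY n k) (dirDeriv (eY n k) g) p) else 0 := by
  unfold dsSummand dtSummand
  simp (disch := fun_prop (disch := simp)) only [dirDeriv_fun_add, dirDeriv_fun_sub,
    dirDeriv_fun_const_mul, dirDeriv_fun_clm_mul, coordQ_eX, coordQ_eY, coordQ_eQ]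
  -- `dirDeriv_comm` is a permutation lemma: `simp` uses it to sort every chain of partials.
  simp (disch := exact (by fun_prop : ContDiff ℝ ∞ _).of_le (by norm_cast)) only [dirDeriv_comm]
  by_cases hjk : j = k
  · subst hjk
    simp only [if_true]
    ring
  · simp only [hjk, Ne.symm hjk, if_false]
    ring

theorem Dt_Ds_sub_Ds_Dt (hg : ContDiff ℝ ∞ g) (p : Vec n) :
    Dt n (Ds n g) p - Ds n (Dt n g) p = I * Lap n g p := by
  rw [Ds_eq_sum_dsSummand hg, Dt_eq_sum_dtSummand hg, Dt_eq_sum_dtSummand (by fun_prop),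
    Ds_eq_sum_dsSummand (by fun_prop)]
  simp only [dtSummand_fun_sum (contDiff_dsSummand hg), dsSummand_fun_sum (contDiff_dtSummand hg),
    Finset.sum_comm (γ := Fin n) (f := fun j k => dsSummand n j (dtSummand n k g) p),
    ← Finset.sum_sub_distrib, dtSummand_dsSummand_sub_dsSummand_dtSummand hg,
    Finset.sum_ite_eq', Finset.mem_univ, if_true, Lap_eq_sum_dirDeriv hg, Finset.mul_sum]

theorem Ds_zero : Ds n (fun _ => 0) = fun _ => 0 := by
  funext p
  simp [Ds, pdx, pdy, pdq]

theorem Dt_zero : Dt n (fun _ => 0) = fun _ => 0 := by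
  funext p
  simp [Dt, pdx, pdy, pdq]

end Commutator

theorem h_monogenic_implies_harmonic_general
    (n : ℕ) (f : Vec n → ℂ) (hf : ContDiff ℝ (⊤ : ℕ∞) f)
    (hDs : Ds n f = fun _ => 0) (hDt : Dt n f = fun _ => 0) :
    Lap n f = fun _ => 0 := by
  funext p
  have hcomm := Dt_Ds_sub_Ds_Dt hf p
  rw [hDs, hDt, Dt_zero, Ds_zero, sub_self] at hcomm
  exact (mul_eq_zero.mp hcomm.symm).resolve_left I_ne_zero

theorem h_monogenic_implies_harmonic
    (n : ℕ) (hn : 1 ≤ n) (f : Vec n → ℂ) (hf : ContDiff ℝ (⊤ : ℕ∞) f)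
    (hDs : Ds n f = fun _ => 0) (hDt : Dt n f = fun _ => 0) :
    Lap n f = fun _ => 0 :=
  h_monogenic_implies_harmonic_general n f hf hDs hDt
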